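/- arXiv:2009.13111 — 3 statements merged into one kernel-verified Lean document; each statement's English description precedes it below -/
import Mathlib

section
/- Let X be a finite subset of ℝ² and G = DG(X) its diameter graph. Then G contains no cycle of length 2k for any k ≥ 2. -/
noncomputable section

/-- the diameter graph of a finite set of points: two points are adjacent iff
their distance equals the diameter of the set -/
def DG {d : ℕ} (X : Finset (EuclideanSpace ℝ (Fin d))) : SimpleGraph X where
  Adj p q := (p : EuclideanSpace ℝ (Fin d)) ≠ q ∧
    dist (p : EuclideanSpace ℝ (Fin d)) q = Metric.diam (X : Set (EuclideanSpace ℝ (Fin d)))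
  symm := by
    constructor
    intro p q h
    exact ⟨fun hh => h.1 hh.symm, by rw [dist_comm]; exact h.2⟩
  loopless := by constructor; intro p h; exact h.1 rfl

/-- the independence number of a graph -/
def indepNum {V : Type*} [Fintype V] (G : SimpleGraph V) : ℕ :=
  sSup {n | ∃ s : Finset V, s.card = n ∧ ∀ x ∈ s, ∀ y ∈ s, x ≠ y → ¬ G.Adj x y}

/-- `G` contains a cycle of length `m` -/
def HasCycleOfLength {V : Type*} (G : SimpleGraph V) (m : ℕ) : Prop :=
  ∃ (v : V) (c : G.Walk v v), c.IsCycle ∧ c.length = m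

/-!
Any two diameters `ab`, `cd` of a planar set meet. By Radon's theorem, either one endpoint lies
in the triangle of the other three, and then on the opposite diameter, or one of the pairs of
segments `ab, cd` / `ac, bd` / `ad, bc` meets. If `ac` and `bd` meet at `p`, then
`ab + cd ≤ ap + pb + cp + pd = ac + bd ≤ 2 diam` forces equality in both triangle inequalities,
so by strict convexity `p` lies on `ab` and on `cd`.

Let `p₀ p₁ ⋯ p_{m-1} p₀` be a cycle of diameters. No other vertex lies on the line `p₀p₁`: it
would lie strictly inside the segment `p₀p₁`, hence strictly closer than the diameter to every
point of the set. So each edge `pᵢpᵢ₊₁` with `2 ≤ i ≤ m - 2`, which meets `p₀p₁`, joins the two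
sides of that line, and `p₂, …, p_{m-1}` alternate sides. For even `m` the vertices `p₂` and
`p_{m-1}` are on opposite sides, so the diameters `p₁p₂` and `p_{m-1}p₀`, which leave the line at
the distinct points `p₁` and `p₀`, cannot meet.
-/

open Metric Module

section OrderedField

variable {𝕜 V : Type*} [Field 𝕜] [LinearOrder 𝕜] [IsStrictOrderedRing 𝕜] [AddCommGroup V]
  [Module 𝕜 V]

theorem mem_convexHull_or_segment_inter_nonempty_of_finrank_le_two [FiniteDimensional 𝕜 V]
    (hV : finrank 𝕜 V ≤ 2) (a b c d : V) :
    a ∈ convexHull 𝕜 {b, c, d} ∨ b ∈ convexHull 𝕜 {a, c, d} ∨ c ∈ convexHull 𝕜 {a, b, d} ∨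
      d ∈ convexHull 𝕜 {a, b, c} ∨ (segment 𝕜 a b ∩ segment 𝕜 c d).Nonempty ∨
      (segment 𝕜 a c ∩ segment 𝕜 b d).Nonempty ∨ (segment 𝕜 a d ∩ segment 𝕜 b c).Nonempty := by
  -- the points are listed backwards so that `simp` below writes the sets in the order above
  have hdep : ¬ AffineIndependent 𝕜 ![d, c, b, a] := by
    rw [← finrank_vectorSpan_le_iff_not_affineIndependent 𝕜 _ (n := 2) (Fintype.card_fin 4)]
    exact (Submodule.finrank_le _).trans hV
  obtain ⟨I, h⟩ := Convex.radon_partition hdep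
  simp only [Set.image, Fin.exists_fin_succ, Fin.succ_zero_eq_one, Fin.succ_one_eq_two] at h
  by_cases h0 : 0 ∈ I <;> by_cases h1 : 1 ∈ I <;> by_cases h2 : 2 ∈ I <;> by_cases h3 : 3 ∈ I <;>
    simp only [h0, h1, h2, h3, Set.mem_compl_iff, not_true_eq_false, not_false_eq_true, true_and,
      false_and, or_false, false_or, or_self, IsEmpty.exists_iff, Nat.succ_eq_add_one,
      Nat.reduceAdd, Fin.reduceSucc, Fin.isValue, Matrix.cons_val, Matrix.cons_val_zero,
      Matrix.cons_val_one, Matrix.cons_val_succ, Matrix.cons_val_fin_one, Set.ofPred_false,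
      Set.ofPred_or, Set.ofPred_eq_eq_singleton', Set.union_singleton, Set.union_insert,
      convexHull_empty, convexHull_singleton, convexHull_pair, Set.empty_inter, Set.inter_empty,
      Set.not_nonempty_empty, Set.singleton_inter_nonempty, Set.inter_singleton_nonempty] at h
  all_goals first | tauto | rw [Set.inter_comm] at h; tauto

theorem mul_neg_of_zero_mem_segment {s t : 𝕜} (h : (0 : 𝕜) ∈ segment 𝕜 s t) (hs : s ≠ 0)
    (ht : t ≠ 0) : s * t < 0 := by
  rw [segment_eq_uIcc, Set.mem_uIcc] at h
  rcases h with ⟨hs', ht'⟩ | ⟨ht', hs'⟩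
  · exact mul_neg_of_neg_of_pos (hs'.lt_of_ne hs) (ht'.lt_of_ne' ht)
  · exact mul_neg_of_pos_of_neg (hs'.lt_of_ne' hs) (ht'.lt_of_ne ht)

theorem not_segment_inter_nonempty_of_mul_neg (g : V →ᵃ[𝕜] 𝕜) {a b x y : V} (hab : a ≠ b)
    (ha : g a = 0) (hb : g b = 0) (hxy : g x * g y < 0) :
    ¬ (segment 𝕜 a x ∩ segment 𝕜 b y).Nonempty := by
  rintro ⟨z, hzx, hzy⟩
  rw [segment_eq_image_lineMap] at hzx hzy
  obtain ⟨t, ⟨ht0, -⟩, rfl⟩ := hzx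
  obtain ⟨r, ⟨hr0, -⟩, hzr⟩ := hzy
  have hg : g (AffineMap.lineMap b y r) = g (AffineMap.lineMap a x t) := by rw [hzr]
  rw [AffineMap.apply_lineMap, AffineMap.apply_lineMap, ha, hb] at hg
  simp only [AffineMap.lineMap_apply_module, smul_eq_mul, mul_zero, zero_add] at hg
  have ht : t * g x ^ 2 = r * (g x * g y) := by linear_combination (-g x) * hg
  have hr : r * g y ^ 2 = t * (g x * g y) := by linear_combination g y * hg
  replace ht := le_antisymm (ht ▸ mul_nonpos_of_nonneg_of_nonpos hr0 hxy.le) (by positivity)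
  replace hr := le_antisymm (hr ▸ mul_nonpos_of_nonneg_of_nonpos ht0 hxy.le) (by positivity)
  rw [mul_eq_zero, or_iff_left (pow_ne_zero 2 (left_ne_zero_of_mul hxy.ne))] at ht
  rw [mul_eq_zero, or_iff_left (pow_ne_zero 2 (right_ne_zero_of_mul hxy.ne))] at hr
  simp [ht, hr] at hzr
  exact hab hzr.symm

theorem neg_one_pow_mul_pos_of_mul_succ_neg {s : ℕ → 𝕜} (h₀ : s 0 ≠ 0) {n : ℕ}
    (h : ∀ i < n, s i * s (i + 1) < 0) : 0 < (-1) ^ n * (s 0 * s n) := by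
  induction n with
  | zero => simpa using mul_self_pos.mpr h₀
  | succ n ih =>
    have hprod := mul_pos (ih fun i hi => h i (by omega)) (neg_pos.mpr (h n (by omega)))
    refine pos_of_mul_pos_right (a := s n ^ 2) ?_ (sq_nonneg _)
    linear_combination hprod

end OrderedField

section Normed

variable {V : Type*} [NormedAddCommGroup V] [NormedSpace ℝ V]

theorem mem_segment_of_mem_convexHull_of_dist_eq {a b c d : V} {D : ℝ}
    (hb : b ∈ convexHull ℝ {a, c, d}) (hab : dist a b = D) (hac : dist a c ≤ D)
    (had : dist a d ≤ D) : b ∈ segment ℝ c d := by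
  rw [convexHull_insert (Set.insert_nonempty c {d}), convexHull_pair, convexJoin_singleton_left,
    Set.mem_iUnion₂] at hb
  obtain ⟨q, hq, hbq⟩ := hb
  have haq : dist a q ≤ D := by
    simpa [dist_comm] using
      (convex_closedBall a D).segment_subset (by simpa [dist_comm] using hac)
        (by simpa [dist_comm] using had) hq
  have hsplit := (mem_segment_iff_wbtw.mp hbq).dist_add_dist
  rwa [dist_le_zero.mp (by linarith : dist b q ≤ 0)]

theorem mem_segment_of_mem_affineSpan_pair {a b x : V} (hx : x ∈ line[ℝ, a, b])
    (hxa : dist x a ≤ dist a b) (hxb : dist x b ≤ dist a b) : x ∈ segment ℝ a b := by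
  rcases (collinear_insert_of_mem_affineSpan_pair hx).wbtw_or_wbtw_or_wbtw with h | h | h
  · have := h.dist_add_dist
    rw [dist_le_zero.mp (by linarith : dist x a ≤ 0)]
    exact left_mem_segment ℝ a b
  · have := h.dist_add_dist
    rw [dist_comm a x, dist_comm b x] at this
    rw [dist_le_zero.mp (by linarith : dist x b ≤ 0)]
    exact right_mem_segment ℝ a b
  · exact mem_segment_iff_wbtw.mpr h.symm

variable [StrictConvexSpace ℝ V]

theorem segment_inter_nonempty_of_mem_segment_inter {a b c d p : V} {D : ℝ}
    (hac : p ∈ segment ℝ a c) (hbd : p ∈ segment ℝ b d) (hab : dist a b = D)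
    (hcd : dist c d = D) (hac' : dist a c ≤ D) (hbd' : dist b d ≤ D) :
    (segment ℝ a b ∩ segment ℝ c d).Nonempty := by
  have hapc := (mem_segment_iff_wbtw.mp hac).dist_add_dist
  have hbpd := (mem_segment_iff_wbtw.mp hbd).dist_add_dist
  have hapb := dist_triangle a p b
  have hcpd := dist_triangle c p d
  rw [dist_comm b p] at hbpd
  rw [dist_comm p c] at hapc
  exact ⟨p, mem_segment_iff_wbtw.mpr (dist_add_dist_eq_iff.mp (by linarith)),
    mem_segment_iff_wbtw.mpr (dist_add_dist_eq_iff.mp (by linarith))⟩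

theorem eq_or_eq_of_mem_segment_of_dist_eq {a b x y : V} {D : ℝ} (hx : x ∈ segment ℝ a b)
    (hxy : dist x y = D) (hay : dist a y ≤ D) (hby : dist b y ≤ D) : x = a ∨ x = b := by
  by_contra! hne
  have hsbtw : Sbtw ℝ a x b := ⟨mem_segment_iff_wbtw.mp hx, hne.1, hne.2⟩
  exact (hsbtw.dist_lt_max_dist y).not_ge (hxy ▸ max_le hay hby)

theorem segment_inter_nonempty_of_dist_eq_diam [FiniteDimensional ℝ V] (hV : finrank ℝ V ≤ 2)
    {s : Set V} (hs : Bornology.IsBounded s) {a b c d : V} (ha : a ∈ s) (hb : b ∈ s) (hc : c ∈ s)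
    (hd : d ∈ s) (hab : dist a b = diam s) (hcd : dist c d = diam s) :
    (segment ℝ a b ∩ segment ℝ c d).Nonempty := by
  have hle {x y : V} (hx : x ∈ s) (hy : y ∈ s) : dist x y ≤ diam s := dist_le_diam_of_mem hs hx hy
  rcases mem_convexHull_or_segment_inter_nonempty_of_finrank_le_two hV a b c d with
    h | h | h | h | h | ⟨p, hac, hbd⟩ | ⟨p, had, hbc⟩
  · exact ⟨a, left_mem_segment ℝ a b, mem_segment_of_mem_convexHull_of_dist_eq h
      (by rwa [dist_comm]) (hle hb hc) (hle hb hd)⟩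
  · exact ⟨b, right_mem_segment ℝ a b,
      mem_segment_of_mem_convexHull_of_dist_eq h hab (hle ha hc) (hle ha hd)⟩
  · rw [Set.pair_comm, Set.insert_comm] at h
    exact ⟨c, mem_segment_of_mem_convexHull_of_dist_eq h (by rwa [dist_comm]) (hle hd ha)
      (hle hd hb), left_mem_segment ℝ c d⟩
  · rw [Set.pair_comm, Set.insert_comm] at h
    exact ⟨d, mem_segment_of_mem_convexHull_of_dist_eq h hcd (hle hc ha) (hle hc hb),
      right_mem_segment ℝ c d⟩
  · exact h
  · exact segment_inter_nonempty_of_mem_segment_inter hac hbd hab hcd (hle ha hc) (hle hb hd)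
  · rw [segment_symm ℝ c d]
    exact segment_inter_nonempty_of_mem_segment_inter had hbc hab (by rwa [dist_comm])
      (hle ha hd) (hle hb hc)

end Normed

section Plane

local notation "ℝ²" => EuclideanSpace ℝ (Fin 2)

def perpDot (u : ℝ²) : ℝ² →ₗ[ℝ] ℝ :=
  u 0 • EuclideanSpace.projₗ 1 - u 1 • EuclideanSpace.projₗ 0

@[simp]
theorem perpDot_apply (u v : ℝ²) : perpDot u v = u 0 * v 1 - u 1 * v 0 := by
  simp [perpDot]

theorem exists_eq_smul_of_perpDot_eq_zero {u v : ℝ²} (hu : u ≠ 0) (h : perpDot u v = 0) :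
    ∃ t : ℝ, v = t • u := by
  have hnorm : u 0 ^ 2 + u 1 ^ 2 ≠ 0 := by
    contrapose! hu
    ext i
    fin_cases i <;> simp <;> nlinarith [sq_nonneg (u 0), sq_nonneg (u 1)]
  rw [perpDot_apply] at h
  refine ⟨(u 0 * v 0 + u 1 * v 1) / (u 0 ^ 2 + u 1 ^ 2), ?_⟩
  ext i
  fin_cases i <;> simp <;> field_simp
  · linear_combination (-u 1) * h
  · linear_combination u 0 * h

def lineSide (a b : ℝ²) : ℝ² →ᵃ[ℝ] ℝ where
  toFun x := perpDot (b - a) (x - a)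
  linear := perpDot (b - a)
  map_vadd' x v := by simp only [vadd_eq_add, add_sub_assoc, map_add]

@[simp]
theorem lineSide_apply (a b x : ℝ²) : lineSide a b x = perpDot (b - a) (x - a) := rfl

theorem lineSide_left (a b : ℝ²) : lineSide a b a = 0 := by simp

theorem lineSide_right (a b : ℝ²) : lineSide a b b = 0 := by simp; ring

theorem mem_affineSpan_pair_of_lineSide_eq_zero {a b x : ℝ²} (hab : a ≠ b)
    (hx : lineSide a b x = 0) : x ∈ line[ℝ, a, b] := by
  obtain ⟨t, ht⟩ := exists_eq_smul_of_perpDot_eq_zero (sub_ne_zero.mpr hab.symm) hx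
  simpa [← ht] using smul_vsub_vadd_mem_affineSpan_pair t a b

variable {s : Set ℝ²}

theorem lineSide_ne_zero_of_dist_eq_diam (hs : Bornology.IsBounded s) {a b x y : ℝ²}
    (ha : a ∈ s) (hb : b ∈ s) (hx : x ∈ s) (hy : y ∈ s) (hab : dist a b = diam s)
    (hxy : dist x y = diam s) (hab' : a ≠ b) (hxa : x ≠ a) (hxb : x ≠ b) :
    lineSide a b x ≠ 0 := by
  intro hside
  have hseg := mem_segment_of_mem_affineSpan_pair
    (mem_affineSpan_pair_of_lineSide_eq_zero hab' hside)
    (hab ▸ dist_le_diam_of_mem hs hx ha) (hab ▸ dist_le_diam_of_mem hs hx hb)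
  rcases eq_or_eq_of_mem_segment_of_dist_eq hseg hxy (dist_le_diam_of_mem hs ha hy)
    (dist_le_diam_of_mem hs hb hy) with h | h
  exacts [hxa h, hxb h]

theorem lineSide_mul_lineSide_neg_of_dist_eq_diam (hs : Bornology.IsBounded s) {a b c d : ℝ²}
    (ha : a ∈ s) (hb : b ∈ s) (hc : c ∈ s) (hd : d ∈ s) (hab : dist a b = diam s)
    (hcd : dist c d = diam s) (hab' : a ≠ b) (hca : c ≠ a) (hcb : c ≠ b) (hda : d ≠ a)
    (hdb : d ≠ b) : lineSide a b c * lineSide a b d < 0 := by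
  obtain ⟨z, hzab, hzcd⟩ := segment_inter_nonempty_of_dist_eq_diam (by simp) hs ha hb hc hd hab hcd
  have hz := image_segment ℝ (lineSide a b) a b ▸ Set.mem_image_of_mem (lineSide a b) hzab
  rw [lineSide_left, lineSide_right, segment_same, Set.mem_singleton_iff] at hz
  refine mul_neg_of_zero_mem_segment ?_
    (lineSide_ne_zero_of_dist_eq_diam hs ha hb hc hd hab hcd hab' hca hcb)
    (lineSide_ne_zero_of_dist_eq_diam hs ha hb hd hc hab (by rwa [dist_comm]) hab' hda hdb)
  exact image_segment ℝ (lineSide a b) c d ▸ ⟨z, hzcd, hz⟩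

theorem odd_of_closed_diameter_walk (hs : Bornology.IsBounded s) {p : ℕ → ℝ²} {m : ℕ}
    (hp : ∀ i, p i ∈ s) (hm : 3 ≤ m) (hedge : ∀ i < m, dist (p i) (p (i + 1)) = diam s)
    (hclosed : p m = p 0) (hinj : Set.InjOn p (Set.Icc 1 m)) : Odd m := by
  by_contra hodd
  obtain ⟨k, rfl⟩ := Nat.not_odd_iff_even.mp hodd
  have hne {i j : ℕ} (hi : 1 ≤ i ∧ i ≤ k + k) (hj : 1 ≤ j ∧ j ≤ k + k) (hij : i ≠ j) :
      p i ≠ p j := fun h => hij (hinj hi hj h)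
  have hp01 : p 0 ≠ p 1 := hclosed ▸ hne ⟨by omega, le_rfl⟩ ⟨le_rfl, by omega⟩ (by omega)
  have hne0 {j : ℕ} (hj : 2 ≤ j ∧ j < k + k) : p j ≠ p 0 :=
    hclosed ▸ hne ⟨by omega, by omega⟩ ⟨by omega, le_rfl⟩ (by omega)
  have hne1 {j : ℕ} (hj : 2 ≤ j ∧ j < k + k) : p j ≠ p 1 :=
    hne ⟨by omega, by omega⟩ ⟨le_rfl, by omega⟩ (by omega)
  set g := lineSide (p 0) (p 1)
  have hside : ∀ i < k + k - 3, g (p (i + 2)) * g (p (i + 2 + 1)) < 0 := fun i hi =>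
    lineSide_mul_lineSide_neg_of_dist_eq_diam hs (hp 0) (hp 1) (hp _) (hp _) (hedge 0 (by omega))
      (hedge _ (by omega)) hp01 (hne0 ⟨by omega, by omega⟩) (hne1 ⟨by omega, by omega⟩)
      (hne0 ⟨by omega, by omega⟩) (hne1 ⟨by omega, by omega⟩)
  have hg2 : g (p 2) ≠ 0 := lineSide_ne_zero_of_dist_eq_diam hs (hp 0) (hp 1) (hp 2) (hp 3)
    (hedge 0 (by omega)) (hedge 2 (by omega)) hp01 (hne0 ⟨le_rfl, by omega⟩)
    (hne1 ⟨le_rfl, by omega⟩)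
  have hopp : g (p 2) * g (p (k + k - 1)) < 0 := by
    have := neg_one_pow_mul_pos_of_mul_succ_neg (s := fun i => g (p (i + 2))) hg2 hside
    rw [Odd.neg_one_pow ⟨k - 2, by omega⟩, show k + k - 3 + 2 = k + k - 1 by omega] at this
    linarith
  have hcross := segment_inter_nonempty_of_dist_eq_diam (by simp) hs (hp 1) (hp 2)
    (hp (k + k - 1)) (hp 0) (hedge 1 (by omega))
    (by rw [← hclosed, ← hedge (k + k - 1) (by omega), Nat.sub_add_cancel (by omega)])
  rw [segment_symm ℝ (p (k + k - 1))] at hcross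
  exact not_segment_inter_nonempty_of_mul_neg g hp01.symm (lineSide_right _ _) (lineSide_left _ _)
    hopp hcross

end Plane

/-- The diameter graph of a finite planar set contains no cycle of length 2k, k ≥ 2. -/
theorem diameter_graph_no_even_cycle (X : Finset (EuclideanSpace ℝ (Fin 2))) :
    ∀ k : ℕ, 2 ≤ k → ¬ HasCycleOfLength (DG X) (2 * k) := by
  rintro k - ⟨v, c, hc, hlen⟩
  have hodd := odd_of_closed_diameter_walk X.finite_toSet.isBounded
    (p := fun i => (c.getVert i : EuclideanSpace ℝ (Fin 2))) (fun i => (c.getVert i).2)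
    hc.three_le_length (fun i hi => (c.adj_getVert_succ hi).2) (by simp)
    (Subtype.coe_injective.comp_injOn hc.getVert_injOn)
  exact Nat.not_odd_iff_even.mpr ⟨k, by omega⟩ hodd

end
end

section
/- The Cayley graph Cay(ℤ₁₇, {±1, ±6}) contains no cycle of length 3 and no cycle of length 5, and its independence number equals 7. Consequently f(17) ≤ 7. -/
noncomputable section

/-- `G` contains no cycle of length 3 and no cycle of length 5 -/
def NoC3C5 {V : Type*} (G : SimpleGraph V) : Prop :=
  ¬ HasCycleOfLength G 3 ∧ ¬ HasCycleOfLength G 5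

/-- `f n` is the minimum independence number among graphs on `n` vertices with
no 3-cycle and no 5-cycle -/
def fmin (n : ℕ) : ℕ :=
  sInf {k | ∃ G : SimpleGraph (Fin n), NoC3C5 G ∧ indepNum G = k}

/-- the Cayley graph `Cay(ℤ₁₇, {±1, ±6})` -/
def cay17 : SimpleGraph (ZMod 17) where
  Adj v w := w - v = 1 ∨ w - v = -1 ∨ w - v = 6 ∨ w - v = -6
  symm := by
    constructor
    intro v w h
    have : v - w = -(w - v) := by ring
    rcases h with h | h | h | h <;> rw [this, h] <;> simp
  loopless := by
    constructor
    intro v h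
    simp only [sub_self] at h
    rcases h with h | h | h | h <;> exact absurd h (by decide)

/-! A closed walk in `cay17` of length `m` writes `0` as a sum of `m` elements of `{±1, ±6}`,
which is impossible for `m = 3, 5` modulo 17. For the independence number, `0, 1, …, 6` is a
7-cycle (six steps `+1`, then `-6`); its 17 translates cover every vertex 7 times and each
meets an independent set in at most 3 vertices, so `7 α ≤ 17 · 3`, while
`{0, 2, 4, 7, 9, 12, 14}` is independent. -/

open Finset
open scoped Pointwise

theorem indepNum_eq_simpleGraph_indepNum {V : Type*} [Fintype V] (G : SimpleGraph V) :
    indepNum G = G.indepNum := by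
  unfold indepNum SimpleGraph.indepNum
  congr 1
  ext n
  exact ⟨fun ⟨s, hc, hs⟩ ↦ ⟨s, hs, hc⟩, fun ⟨s, hs, hc⟩ ↦ ⟨s, hc, hs⟩⟩

theorem SimpleGraph.Walk.sub_mem_length_nsmul {α : Type*} [AddGroup α] {G : SimpleGraph α}
    {S : Set α} (hG : ∀ v w, G.Adj v w → w - v ∈ S) {u v : α} (p : G.Walk u v) :
    v - u ∈ p.length • S := by
  induction p with
  | nil => simp
  | cons h p ih =>
    rw [SimpleGraph.Walk.length_cons, succ_nsmul, ← sub_add_sub_cancel]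
    exact Set.add_mem_add ih (hG _ _ h)

theorem not_hasCycleOfLength_of_zero_notMem_nsmul {α : Type*} [AddGroup α] {G : SimpleGraph α}
    {S : Set α} (hG : ∀ v w, G.Adj v w → w - v ∈ S) {m : ℕ} (h0 : (0 : α) ∉ m • S) :
    ¬ HasCycleOfLength G m := by
  rintro ⟨v, c, -, rfl⟩
  simpa using h0 (by simpa using c.sub_mem_length_nsmul hG)

theorem Finset.sum_card_filter_add_mem {G ι : Type*} [AddGroup G] [Fintype G] [DecidableEq G]
    [Fintype ι] (c : ι → G) (s : Finset G) :
    ∑ x, #{i | x + c i ∈ s} = Fintype.card ι * #s := by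
  simp_rw [card_filter]
  rw [sum_comm, Fintype.card_eq_sum_ones, sum_mul, one_mul]
  refine sum_congr rfl fun i _ ↦ ?_
  rw [← Equiv.sum_comp (Equiv.addRight (c i)).symm]
  simp

/-- The no-homomorphism lemma of Albertson and Collins: the translates `x + φ ·` pull an
independent set `s` of `Γ` back to independent sets of `H` whose sizes add up to `#s * card ι`. -/
theorem SimpleGraph.indepNum_mul_card_le_of_hom {G ι : Type*} [AddGroup G] [Fintype G]
    [Fintype ι] {Γ : SimpleGraph G} {H : SimpleGraph ι}
    (hΓ : ∀ x v w, Γ.Adj v w → Γ.Adj (x + v) (x + w)) (φ : H →g Γ) :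
    Γ.indepNum * Fintype.card ι ≤ Fintype.card G * H.indepNum := by
  classical
  obtain ⟨s, hs, hcard⟩ := Γ.exists_isNIndepSet_indepNum
  have hpullback (x : G) : #{i | x + φ i ∈ s} ≤ H.indepNum := by
    refine SimpleGraph.IsIndepSet.card_le_indepNum fun i hi j hj _ hij ↦ ?_
    have hadj := hΓ x _ _ (φ.map_rel hij)
    simp only [coe_filter, mem_univ, true_and, Set.mem_ofPred_eq] at hi hj
    exact hs hi hj hadj.ne hadj
  calc Γ.indepNum * Fintype.card ι = ∑ x, #{i | x + φ i ∈ s} := by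
        rw [sum_card_filter_add_mem, hcard, mul_comm]
    _ ≤ ∑ _x : G, H.indepNum := sum_le_sum fun x _ ↦ hpullback x
    _ = Fintype.card G * H.indepNum := by simp

theorem SimpleGraph.cycleGraph_indepNum_mul_two_le (n : ℕ) :
    (cycleGraph (n + 2)).indepNum * 2 ≤ n + 2 := by
  obtain ⟨t, ht, hcard⟩ := (cycleGraph (n + 2)).exists_isNIndepSet_indepNum
  have hdisj : Disjoint t (t.map (Equiv.addRight 1).toEmbedding) := by
    rw [Finset.disjoint_left]
    intro i hi hi'
    obtain ⟨j, hj, rfl⟩ := mem_map.mp hi'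
    have hadj : (cycleGraph (n + 2)).Adj j (Equiv.addRight 1 j) := by simp [cycleGraph_adj]
    exact ht hj hi hadj.ne hadj
  calc (cycleGraph (n + 2)).indepNum * 2 = #(t ∪ t.map (Equiv.addRight 1).toEmbedding) := by
        rw [card_union_of_disjoint hdisj, card_map, hcard, mul_two]
    _ ≤ n + 2 := (card_le_univ _).trans_eq (Fintype.card_fin _)

theorem cay17_adj_iff {v w : ZMod 17} :
    cay17.Adj v w ↔ w - v ∈ ({1, -1, 6, -6} : Finset (ZMod 17)) := by
  simp [cay17]

instance : DecidableRel cay17.Adj := fun _ _ ↦ decidable_of_iff _ cay17_adj_iff.symm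

theorem cay17_adj_add_left (x : ZMod 17) {v w : ZMod 17} (h : cay17.Adj v w) :
    cay17.Adj (x + v) (x + w) := by
  rwa [cay17_adj_iff, add_sub_add_left_eq_sub, ← cay17_adj_iff]

theorem cay17_not_hasCycleOfLength_of_zero_notMem {m : ℕ}
    (h0 : (0 : ZMod 17) ∉ m • ({1, -1, 6, -6} : Finset (ZMod 17))) :
    ¬ HasCycleOfLength cay17 m := by
  refine not_hasCycleOfLength_of_zero_notMem_nsmul (fun _ _ h ↦ cay17_adj_iff.mp h) ?_
  rwa [← coe_nsmul, mem_coe]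

theorem cay17_not_hasCycleOfLength_three : ¬ HasCycleOfLength cay17 3 :=
  cay17_not_hasCycleOfLength_of_zero_notMem (by decide)

theorem cay17_not_hasCycleOfLength_five : ¬ HasCycleOfLength cay17 5 :=
  cay17_not_hasCycleOfLength_of_zero_notMem (by decide)

def cycleGraphSevenHomCay17 : SimpleGraph.cycleGraph 7 →g cay17 where
  toFun i := (i : ℕ)
  map_rel' := by
    have : ∀ i j : Fin 7, (SimpleGraph.cycleGraph 7).Adj i j → cay17.Adj (i : ℕ) (j : ℕ) := by
      decide
    exact fun {i j} ↦ this i j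

theorem cay17_indepNum : cay17.indepNum = 7 := by
  have hupper : cay17.indepNum * 7 ≤ 17 * (SimpleGraph.cycleGraph 7).indepNum :=
    SimpleGraph.indepNum_mul_card_le_of_hom cay17_adj_add_left cycleGraphSevenHomCay17
  have hcycle : (SimpleGraph.cycleGraph 7).indepNum * 2 ≤ 7 :=
    SimpleGraph.cycleGraph_indepNum_mul_two_le 5
  have hindep : cay17.IsIndepSet ↑({0, 2, 4, 7, 9, 12, 14} : Finset (ZMod 17)) := by
    decide
  have hlower : 7 ≤ cay17.indepNum := hindep.card_le_indepNum
  omega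

/-- `Cay(ℤ₁₇, {±1, ±6})` has no 3-cycle and no 5-cycle, and its independence
number is 7; consequently `f 17 ≤ 7`. -/
theorem cay17_no_C3_no_C5_indep_seven :
    ¬ HasCycleOfLength cay17 3 ∧ ¬ HasCycleOfLength cay17 5 ∧
    indepNum cay17 = 7 ∧ fmin 17 ≤ 7 := by
  have hC3C5 : NoC3C5 cay17 :=
    ⟨cay17_not_hasCycleOfLength_three, cay17_not_hasCycleOfLength_five⟩
  have hindep : indepNum cay17 = 7 := by
    rw [indepNum_eq_simpleGraph_indepNum, cay17_indepNum]
  exact ⟨hC3C5.1, hC3C5.2, hindep, Nat.sInf_le ⟨cay17, hC3C5, hindep⟩⟩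

end
end

section
/- The function f satisfies f(12) = 5 and f(16) = 7. -/
noncomputable section

/-!
Upper bounds: the Möbius ladders `circulantGraph {±1, m}` on `ℤ/2m` for `m = 6, 8` have no
closed walk of length 3 or 5, since no 3 or 5 of the jumps `±1, m` sum to zero. An independent set
`s` of such a ladder has `2|s| < 2m`: otherwise `s ∪ (s + 1)` is everything, so `s` is closed
under `+ 2` and, `m` being even, contains two adjacent vertices `i` and `i + m`.

Lower bounds: in a `{C₃, C₅}`-free graph the neighbourhood `N` of a vertex and the set `M` of
neighbours of `N` are both independent, and every independent subset of the rest `R` can be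
enlarged by `N`. If `α ≤ k`, a vertex of degree `d` thus leaves `R` with `|R| ≥ n - d - k` and
`α(R) ≤ k - d`, which the Ramsey-type bound `2|R| ≤ (k - d)(k - d + 3)` rules out for large `d`.
For maximum degree two, a greedy choice of independent sets gives `α ≥ 3n/7`. Only `n = 16` with
maximum degree three needs a closer look at `R`.
-/

open Finset

section Cycles

open SimpleGraph

variable {V : Type*} {G : SimpleGraph V}

theorem NoC3C5.cliqueFree_three (hG : NoC3C5 G) : G.CliqueFree 3 :=
  fun s hs => hG.1 (is3Clique_iff_exists_cycle_length_three.1 ⟨s, hs⟩)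

theorem not_adj_of_cliqueFree_three (hG : G.CliqueFree 3) {v a b : V} (ha : G.Adj v a)
    (hb : G.Adj v b) : ¬ G.Adj a b := by
  classical
  exact fun hab => hG {v, a, b} (is3Clique_triple_iff.2 ⟨ha, hb, hab⟩)

/-- Otherwise the closed walk `v a x y b v` of length five contains a triangle or a pentagon. -/
theorem NoC3C5.not_adj_of_adj_adj_of_adj_adj (hG : NoC3C5 G) {v a x b y : V} (hva : G.Adj v a)
    (hax : G.Adj a x) (hvb : G.Adj v b) (hby : G.Adj b y) : ¬ G.Adj x y := by
  intro hxy
  have hT := hG.cliqueFree_three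
  by_cases hay : a = y
  · subst hay; exact not_adj_of_cliqueFree_three hT hva hvb hby.symm
  by_cases hab : a = b
  · subst hab; exact not_adj_of_cliqueFree_three hT hax hby hxy
  by_cases hxb : x = b
  · subst hxb; exact not_adj_of_cliqueFree_three hT hva hvb hax
  by_cases hxv : x = v
  · subst hxv; exact not_adj_of_cliqueFree_three hT hxy hvb hby.symm
  by_cases hyv : y = v
  · subst hyv; exact not_adj_of_cliqueFree_three hT hva.symm hax hxy.symm
  refine hG.2 ⟨v, .cons hva (.cons hax (.cons hxy (.cons hby.symm (.cons hvb.symm .nil)))), ?_, rfl⟩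
  simp [Walk.cons_isCycle_iff, hva.ne, hax.ne, hxy.ne, hvb.ne, hva.ne', hby.ne', hvb.ne', hay,
    hab, hxb, hxv, hyv, Ne.symm hxv, Ne.symm hyv]

end Cycles

section Neighbourhoods

open SimpleGraph

variable {V : Type*} {G : SimpleGraph V} {s s' A I t : Finset V} {v x : V} {k : ℕ}

/-- `α(G[s]) ≤ k`; induced subgraphs are handled through their vertex sets throughout. -/
def IndepBound (G : SimpleGraph V) (s : Finset V) (k : ℕ) : Prop :=
  ∀ t ⊆ s, G.IsIndepSet (t : Set V) → #t ≤ k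

def nbrIn (G : SimpleGraph V) [DecidableRel G.Adj] (s : Finset V) (v : V) : Finset V :=
  s.filter (G.Adj v)

def nbrsIn [DecidableEq V] (G : SimpleGraph V) [DecidableRel G.Adj] (s A : Finset V) :
    Finset V :=
  A.biUnion (nbrIn G s)

theorem isIndepSet_triple [DecidableEq V] {a b c : V} (hab : ¬ G.Adj a b) (hac : ¬ G.Adj a c)
    (hbc : ¬ G.Adj b c) : G.IsIndepSet (({a, b, c} : Finset V) : Set V) := by
  intro x hx y hy _
  simp only [mem_coe, mem_insert, mem_singleton] at hx hy
  rcases hx with rfl | rfl | rfl <;> rcases hy with rfl | rfl | rfl <;>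
    grind [SimpleGraph.adj_comm, SimpleGraph.irrefl]

variable [DecidableRel G.Adj]

@[simp] theorem mem_nbrIn : x ∈ nbrIn G s v ↔ x ∈ s ∧ G.Adj v x := mem_filter

theorem nbrIn_subset : nbrIn G s v ⊆ s := filter_subset _ _

theorem nbrIn_mono (h : s' ⊆ s) : nbrIn G s' v ⊆ nbrIn G s v := filter_subset_filter _ h

theorem isIndepSet_nbrIn (hG : G.CliqueFree 3) : G.IsIndepSet (nbrIn G s v : Set V) :=
  fun _ ha _ hb _ => not_adj_of_cliqueFree_three hG (mem_nbrIn.1 ha).2 (mem_nbrIn.1 hb).2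

variable [DecidableEq V]

@[simp] theorem mem_nbrsIn : x ∈ nbrsIn G s A ↔ x ∈ s ∧ ∃ a ∈ A, G.Adj a x := by
  simp only [nbrsIn, mem_biUnion, mem_nbrIn]
  tauto

theorem nbrsIn_subset : nbrsIn G s A ⊆ s := fun _ hx => (mem_nbrsIn.1 hx).1

@[simp] theorem nbrsIn_singleton : nbrsIn G s {v} = nbrIn G s v := singleton_biUnion

theorem card_nbrsIn_le_card_mul {n : ℕ} (h : ∀ a ∈ A, #(nbrIn G s a) ≤ n) :
    #(nbrsIn G s A) ≤ #A * n :=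
  card_biUnion_le_card_mul _ _ _ h

theorem nbrsIn_insert : nbrsIn G s (insert v A) = nbrIn G s v ∪ nbrsIn G s A := biUnion_insert

theorem NoC3C5.isIndepSet_nbrsIn_nbrIn (hG : NoC3C5 G) :
    G.IsIndepSet (nbrsIn G s (nbrIn G s v) : Set V) := by
  rintro x hx y hy -
  obtain ⟨-, a, ha, hax⟩ := mem_nbrsIn.1 hx
  obtain ⟨-, b, hb, hby⟩ := mem_nbrsIn.1 hy
  exact hG.not_adj_of_adj_adj_of_adj_adj (mem_nbrIn.1 ha).2 hax (mem_nbrIn.1 hb).2 hby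

theorem isIndepSet_union_of_subset_sdiff (hI : G.IsIndepSet (I : Set V))
    (ht : G.IsIndepSet (t : Set V)) (hts : t ⊆ s \ (I ∪ nbrsIn G s I)) :
    G.IsIndepSet (↑(I ∪ t) : Set V) := by
  rw [coe_union, IsIndepSet, Set.pairwise_union]
  refine ⟨hI, ht, fun a ha b hb _ => ?_⟩
  have hb' := mem_sdiff.1 (hts hb)
  have hab : ¬ G.Adj a b := fun h => hb'.2 (mem_union_right _ (mem_nbrsIn.2 ⟨hb'.1, a, ha, h⟩))
  exact ⟨hab, fun h => hab h.symm⟩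

theorem IndepBound.sdiff (hk : IndepBound G s k) (hIs : I ⊆ s) (hI : G.IsIndepSet (I : Set V)) :
    IndepBound G (s \ (I ∪ nbrsIn G s I)) (k - #I) := by
  intro t hts ht
  have hdisj : Disjoint I t :=
    disjoint_left.2 fun a ha hat => (mem_sdiff.1 (hts hat)).2 (mem_union_left _ ha)
  have := hk _ (union_subset hIs (hts.trans sdiff_subset))
    (isIndepSet_union_of_subset_sdiff hI ht hts)
  rw [card_union_of_disjoint hdisj] at this
  omega

end Neighbourhoods

section Counting

variable {V : Type*} [DecidableEq V] {G : SimpleGraph V} [DecidableRel G.Adj] {s : Finset V}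
  {k : ℕ}

theorem card_le_card_add_card_sdiff_union (s A B : Finset V) :
    #s ≤ #A + #B + #(s \ (A ∪ B)) :=
  (card_le_card_sdiff_add_card (t := A ∪ B)).trans (by have := card_union_le A B; omega)

/-- The Ramsey-type bound `|s| ≤ r(k)` with `r(k) = 1 + k + r(k - 1)`: remove a vertex together
with its (independent) neighbourhood. -/
theorem IndepBound.two_mul_card_le (hG : G.CliqueFree 3) (hk : IndepBound G s k) :
    2 * #s ≤ k * (k + 3) := by
  induction k generalizing s with
  | zero =>
    obtain rfl | ⟨v, hv⟩ := s.eq_empty_or_nonempty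
    · simp
    · simpa using hk {v} (by simpa using hv) (by simp)
  | succ k ih =>
    obtain rfl | ⟨v, hv⟩ := s.eq_empty_or_nonempty
    · simp
    have hR := hk.sdiff (singleton_subset_iff.2 hv) (by simp)
    rw [card_singleton, add_tsub_cancel_right, nbrsIn_singleton] at hR
    have hdeg := hk _ nbrIn_subset (isIndepSet_nbrIn hG (v := v))
    have := card_le_card_add_card_sdiff_union s {v} (nbrIn G s v)
    have := ih hR
    rw [card_singleton] at *
    nlinarith

theorem NoC3C5.two_mul_card_le (hG : NoC3C5 G) (hk : IndepBound G s k) (v : V) :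
    2 * #s ≤ 2 * (#(nbrIn G s v) + k) + (k - #(nbrIn G s v)) * (k - #(nbrIn G s v) + 3) := by
  set N := nbrIn G s v
  have hR := (hk.sdiff nbrIn_subset (isIndepSet_nbrIn hG.cliqueFree_three (v := v))).two_mul_card_le
    hG.cliqueFree_three
  have hM := hk _ nbrsIn_subset (hG.isIndepSet_nbrsIn_nbrIn (v := v))
  have := card_le_card_add_card_sdiff_union s N (nbrsIn G s N)
  linarith

/-- Greedy: take such an `I` and recurse on `s` minus the closed neighbourhood of `I`. -/
theorem IndepBound.mul_card_le_of_exists {P : Finset V → Prop} {c d : ℕ}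
    (hP : ∀ ⦃s t⦄, t ⊆ s → P s → P t)
    (hstep : ∀ s, P s → s.Nonempty →
      ∃ I ⊆ s, I.Nonempty ∧ G.IsIndepSet (I : Set V) ∧ c * #(I ∪ nbrsIn G s I) ≤ d * #I)
    (hs : P s) (hk : IndepBound G s k) : c * #s ≤ d * k := by
  induction hn : #s using Nat.strong_induction_on generalizing s k with
  | _ n ih =>
  subst hn
  obtain rfl | hne := s.eq_empty_or_nonempty
  · simp
  obtain ⟨I, hIs, hIne, hI, hcd⟩ := hstep s hs hne
  set R := s \ (I ∪ nbrsIn G s I)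
  have hIk := hk I hIs hI
  have hR := ih #R ?_ (hP sdiff_subset hs) (hk.sdiff hIs hI) rfl
  · rw [Nat.mul_sub] at hR
    calc c * #s ≤ c * (#R + #(I ∪ nbrsIn G s I)) :=
          Nat.mul_le_mul_left _ card_le_card_sdiff_add_card
      _ = c * #R + c * #(I ∪ nbrsIn G s I) := mul_add ..
      _ ≤ (d * k - d * #I) + d * #I := add_le_add hR hcd
      _ = d * k := Nat.sub_add_cancel (Nat.mul_le_mul_left d hIk)
  · exact card_lt_card (sdiff_ssubset (union_subset hIs nbrsIn_subset)
      (hIne.mono subset_union_left))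

end Counting

section Greedy

open SimpleGraph

variable {V : Type*} [DecidableEq V] {G : SimpleGraph V} [DecidableRel G.Adj] {s : Finset V}
  {k : ℕ}

/-- On a path `x - u - v - w - y` the set `{v, x, y}` is independent and, as
`N(v) = {u, w} ⊆ N(x) ∪ N(y)`, its closed neighbourhood has at most `7` vertices (`4` if
`x = y`). -/
theorem NoC3C5.exists_indepSet_of_forall_card_nbrIn_eq_two (hG : NoC3C5 G)
    (hdeg : ∀ v ∈ s, #(nbrIn G s v) = 2) {v : V} (hv : v ∈ s) :
    ∃ I ⊆ s, I.Nonempty ∧ G.IsIndepSet (I : Set V) ∧ 3 * #(I ∪ nbrsIn G s I) ≤ 7 * #I := by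
  have hT := hG.cliqueFree_three
  obtain ⟨u, w, -, hN⟩ := card_eq_two.1 (hdeg v hv)
  have hu : u ∈ nbrIn G s v := by simp [hN]
  have hw : w ∈ nbrIn G s v := by simp [hN]
  rw [mem_nbrIn] at hu hw
  obtain ⟨x, hx, hxv⟩ := exists_mem_ne (by rw [hdeg u hu.1]; omega) v
  obtain ⟨y, hy, hyv⟩ := exists_mem_ne (by rw [hdeg w hw.1]; omega) v
  rw [mem_nbrIn] at hx hy
  have hvJ : v ∉ ({x, y} : Finset V) := by simp [hxv.symm, hyv.symm]
  have hvx := not_adj_of_cliqueFree_three hT hu.2.symm hx.2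
  have hvy := not_adj_of_cliqueFree_three hT hw.2.symm hy.2
  have hxy := hG.not_adj_of_adj_adj_of_adj_adj hu.2 hx.2 hw.2 hy.2
  have hI := isIndepSet_triple hvx hvy hxy
  have hNI : nbrsIn G s (insert v {x, y}) = nbrsIn G s {x, y} := by
    rw [nbrsIn_insert, union_eq_right, hN, insert_subset_iff, singleton_subset_iff]
    exact ⟨mem_nbrsIn.2 ⟨hu.1, x, by simp, hx.2.symm⟩, mem_nbrsIn.2 ⟨hw.1, y, by simp, hy.2.symm⟩⟩
  have hJs : {x, y} ⊆ s := by simp [insert_subset_iff, hx.1, hy.1]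
  refine ⟨insert v {x, y}, insert_subset hv hJs, insert_nonempty .., hI, ?_⟩
  have h1 := card_union_le (insert v {x, y}) (nbrsIn G s {x, y})
  have h2 := card_nbrsIn_le_card_mul (G := G) (s := s) (A := {x, y}) (n := 2)
    (fun a ha => (hdeg a (hJs ha)).le)
  have h3 : #({x, y} : Finset V) ≤ 2 := card_le_two
  rw [hNI, card_insert_of_notMem hvJ] at *
  omega

theorem NoC3C5.exists_indepSet_of_forall_card_nbrIn_le_two (hG : NoC3C5 G)
    (hdeg : ∀ v ∈ s, #(nbrIn G s v) ≤ 2) (hne : s.Nonempty) :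
    ∃ I ⊆ s, I.Nonempty ∧ G.IsIndepSet (I : Set V) ∧ 3 * #(I ∪ nbrsIn G s I) ≤ 7 * #I := by
  by_cases h1 : ∃ v ∈ s, #(nbrIn G s v) ≤ 1
  · obtain ⟨v, hv, hv1⟩ := h1
    refine ⟨{v}, singleton_subset_iff.2 hv, singleton_nonempty v, by simp, ?_⟩
    have := card_union_le {v} (nbrIn G s v)
    rw [nbrsIn_singleton, card_singleton] at *
    omega
  · push Not at h1
    obtain ⟨v, hv⟩ := hne
    exact hG.exists_indepSet_of_forall_card_nbrIn_eq_two
      (fun w hw => le_antisymm (hdeg w hw) (h1 w hw)) hv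

theorem NoC3C5.three_mul_card_le (hG : NoC3C5 G) (hdeg : ∀ v ∈ s, #(nbrIn G s v) ≤ 2)
    (hk : IndepBound G s k) : 3 * #s ≤ 7 * k :=
  hk.mul_card_le_of_exists
    (fun _ _ hts hs v hv => (card_le_card (nbrIn_mono hts)).trans (hs v (hts hv)))
    (fun _ hs hne => hG.exists_indepSet_of_forall_card_nbrIn_le_two hs hne) hdeg

end Greedy

section Matching

open SimpleGraph

variable {V : Type*} [DecidableEq V] {G : SimpleGraph V} [DecidableRel G.Adj] {M R : Finset V}

theorem sdiff_subset_sdiff_union_nbrsIn {I P : Finset V} (hRM : Disjoint R M) (hIR : I ⊆ R)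
    (hP : ∀ a ∈ I, nbrIn G M a ⊆ P) : M \ P ⊆ (M ∪ R) \ (I ∪ nbrsIn G (M ∪ R) I) := by
  intro z hz
  rw [mem_sdiff] at hz
  refine mem_sdiff.2 ⟨mem_union_left _ hz.1, ?_⟩
  rw [mem_union, mem_nbrsIn]
  rintro (hzI | ⟨-, a, ha, haz⟩)
  · exact disjoint_right.1 hRM hz.1 (hIR hzI)
  · exact hz.2 (hP a ha (mem_nbrIn.2 ⟨hz.1, haz⟩))

/-- Two vertices `x ≠ y` of `R` with the same neighbour `p x = p y` in `M`, and a vertex `g` of `R`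
adjacent to neither, replace the two vertices `p x, p g` of `M`. -/
theorem exists_indepSet_card_gt_of_nbrIn_eq_singleton (hT : G.CliqueFree 3)
    (hM : G.IsIndepSet (M : Set V)) (hRM : Disjoint R M) {p : V → V}
    (hp : ∀ x ∈ R, nbrIn G M x = {p x}) (hR2 : ∀ x ∈ R, #(nbrIn G R x) ≤ 2) (hMR : #M < #R)
    (hR : 6 < #R) : ∃ t ⊆ M ∪ R, G.IsIndepSet (t : Set V) ∧ #M < #t := by
  have hpM : ∀ x ∈ R, p x ∈ M ∧ G.Adj x (p x) := fun x hx =>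
    mem_nbrIn.1 ((hp x hx).symm ▸ mem_singleton_self (p x))
  obtain ⟨x, hx, y, hy, hxy, hpxy⟩ :=
    exists_ne_map_eq_of_card_lt_of_maps_to hMR fun x hx => (hpM x hx).1
  obtain ⟨g, hg⟩ : (R \ ({x, y} ∪ nbrIn G R x ∪ nbrIn G R y)).Nonempty := by
    have h1 := card_union_le ({x, y} ∪ nbrIn G R x) (nbrIn G R y)
    have h2 := card_union_le ({x, y} : Finset V) (nbrIn G R x)
    have h3 : #({x, y} : Finset V) ≤ 2 := card_le_two
    have := hR2 x hx
    have := hR2 y hy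
    have := card_le_card_sdiff_add_card (s := R) (t := {x, y} ∪ nbrIn G R x ∪ nbrIn G R y)
    rw [← card_pos]
    omega
  simp only [mem_sdiff, mem_union, mem_insert, mem_singleton, mem_nbrIn, not_or] at hg
  obtain ⟨hgR, ⟨⟨hgx, hgy⟩, hxg⟩, hyg⟩ := hg
  have hI : G.IsIndepSet (({x, y, g} : Finset V) : Set V) := by
    refine isIndepSet_triple ?_ (fun h => hxg ⟨hgR, h⟩) (fun h => hyg ⟨hgR, h⟩)
    exact not_adj_of_cliqueFree_three hT (hpM x hx).2.symm (hpxy ▸ (hpM y hy).2.symm)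
  have hIR : ({x, y, g} : Finset V) ⊆ R := by simp [insert_subset_iff, hx, hy, hgR]
  set t := M \ {p x, p g}
  have ht : t ⊆ (M ∪ R) \ ({x, y, g} ∪ nbrsIn G (M ∪ R) {x, y, g}) := by
    refine sdiff_subset_sdiff_union_nbrsIn hRM hIR fun a ha => ?_
    simp only [mem_insert, mem_singleton] at ha
    rcases ha with rfl | rfl | rfl
    · simp [hp _ hx]
    · simp [hp _ hy, ← hpxy]
    · simp [hp _ hgR]
  refine ⟨{x, y, g} ∪ t, union_subset (hIR.trans subset_union_right)
    (sdiff_subset.trans subset_union_left), isIndepSet_union_of_subset_sdiff hI (hM.mono ?_) ht, ?_⟩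
  · exact coe_subset.2 sdiff_subset
  · have hdisj : Disjoint ({x, y, g} : Finset V) t :=
      disjoint_of_subset_left hIR (disjoint_of_subset_right sdiff_subset hRM)
    have h3 : #({x, y, g} : Finset V) = 3 :=
      card_eq_three.2 ⟨x, y, g, hxy, Ne.symm hgx, Ne.symm hgy, rfl⟩
    have : #M ≤ #t + #({p x, p g} : Finset V) := card_le_card_sdiff_add_card
    have : #({p x, p g} : Finset V) ≤ 2 := card_le_two
    rw [card_union_of_disjoint hdisj, h3]
    omega

theorem exists_indepSet_card_gt (hT : G.CliqueFree 3) (hM : G.IsIndepSet (M : Set V))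
    (hRM : Disjoint R M) (hRM1 : ∀ x ∈ R, #(nbrIn G M x) ≤ 1) (hR2 : ∀ x ∈ R, #(nbrIn G R x) ≤ 2)
    (hMR : #M < #R) (hR : 6 < #R) : ∃ t ⊆ M ∪ R, G.IsIndepSet (t : Set V) ∧ #M < #t := by
  by_cases h0 : ∃ x ∈ R, nbrIn G M x = ∅
  · obtain ⟨x, hx, hx0⟩ := h0
    have hxM : x ∉ M := disjoint_left.1 hRM hx
    refine ⟨{x} ∪ M, union_subset (singleton_subset_iff.2 (mem_union_right _ hx)) subset_union_left,
      isIndepSet_union_of_subset_sdiff (s := M) (by simp) hM ?_, ?_⟩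
    · rw [nbrsIn_singleton, hx0, union_empty]
      exact fun z hz => mem_sdiff.2 ⟨hz, fun h => hxM (mem_singleton.1 h ▸ hz)⟩
    · rw [card_union_of_disjoint (disjoint_singleton_left.2 hxM), card_singleton]
      omega
  · push Not at h0
    have hp : ∀ x, ∃ p, x ∈ R → nbrIn G M x = {p} := by
      intro x
      by_cases hx : x ∈ R
      · obtain ⟨p, hp⟩ := card_eq_one.1
          (le_antisymm (hRM1 x hx) (card_pos.2 (h0 x hx)))
        exact ⟨p, fun _ => hp⟩
      · exact ⟨x, fun h => absurd h hx⟩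
    choose p hp using hp
    exact exists_indepSet_card_gt_of_nbrIn_eq_singleton hT hM hRM hp hR2 hMR hR

end Matching

section LowerBounds

open SimpleGraph

variable {V : Type*} [DecidableEq V] {G : SimpleGraph V} [DecidableRel G.Adj] {s R : Finset V}

theorem NoC3C5.card_nbrIn_eq_two_of_indepBound_three (hG : NoC3C5 G) (hR3 : IndepBound G R 3)
    (hR : 7 ≤ #R) (hdeg : ∀ w ∈ R, #(nbrIn G R w) ≤ 3) {w : V} (hw : w ∈ R) :
    #(nbrIn G R w) = 2 := by
  have hdeg2 : ∀ z ∈ R, #(nbrIn G R z) ≤ 2 := by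
    intro z hz
    by_contra h
    have := hG.two_mul_card_le hR3 z
    rw [show #(nbrIn G R z) = 3 by have := hdeg z hz; omega] at this
    omega
  by_contra h
  have hR' := hR3.sdiff (singleton_subset_iff.2 hw) (by simp)
  rw [nbrsIn_singleton, card_singleton] at hR'
  have := hG.three_mul_card_le
    (fun z hz => (card_le_card (nbrIn_mono sdiff_subset)).trans (hdeg2 z (sdiff_subset hz))) hR'
  have := card_le_card_add_card_sdiff_union R {w} (nbrIn G R w)
  have := hdeg2 w hw
  rw [card_singleton] at *
  omega

/-- With `N` the neighbourhood of `v` and `M` the (independent) second layer, the rest `R` of a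
counterexample is a `7`-cycle each of whose vertices has at most one neighbour in `M`. -/
theorem NoC3C5.not_indepBound_six_of_card_nbrIn_eq_three (hG : NoC3C5 G) (hs : 16 ≤ #s)
    (hdeg : ∀ w ∈ s, #(nbrIn G s w) ≤ 3) {v : V} (hv : #(nbrIn G s v) = 3) :
    ¬ IndepBound G s 6 := by
  intro hk
  set N := nbrIn G s v
  set M := nbrsIn G s N
  set R := s \ (N ∪ M)
  have hT := hG.cliqueFree_three
  have hM : G.IsIndepSet (M : Set V) := hG.isIndepSet_nbrsIn_nbrIn
  have hM6 : #M ≤ 6 := hk M nbrsIn_subset hM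
  have hR3 : IndepBound G R 3 := by
    have := hk.sdiff (I := N) nbrIn_subset (isIndepSet_nbrIn hT)
    rwa [hv] at this
  have hsR : #s ≤ #N + #M + #R := card_le_card_add_card_sdiff_union s N M
  have hRdeg : ∀ w ∈ R, #(nbrIn G R w) ≤ 3 := fun w hw =>
    (card_le_card (nbrIn_mono sdiff_subset)).trans (hdeg w (sdiff_subset hw))
  have hR2 : ∀ w ∈ R, #(nbrIn G R w) = 2 := fun w hw =>
    hG.card_nbrIn_eq_two_of_indepBound_three hR3 (by omega) hRdeg hw
  have hR7 := hG.three_mul_card_le (fun w hw => (hR2 w hw).le) hR3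
  have hRM : Disjoint R M := sdiff_disjoint.mono_right subset_union_right
  have hRM1 : ∀ x ∈ R, #(nbrIn G M x) ≤ 1 := by
    intro x hx
    have hdisj : Disjoint (nbrIn G R x) (nbrIn G M x) := hRM.mono nbrIn_subset nbrIn_subset
    have hsub : nbrIn G R x ∪ nbrIn G M x ⊆ nbrIn G s x :=
      union_subset (nbrIn_mono sdiff_subset) (nbrIn_mono nbrsIn_subset)
    have := card_le_card hsub
    rw [card_union_of_disjoint hdisj, hR2 x hx] at this
    have := hdeg x (sdiff_subset hx)
    omega
  obtain ⟨t, hts, ht, hMt⟩ :=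
    exists_indepSet_card_gt hT hM hRM hRM1 (fun x hx => (hR2 x hx).le) (by omega) (by omega)
  have := hk t (hts.trans (union_subset nbrsIn_subset sdiff_subset)) ht
  omega

theorem NoC3C5.not_indepBound_four (hG : NoC3C5 G) (hs : 12 ≤ #s) : ¬ IndepBound G s 4 := by
  intro hk
  by_cases h : ∃ v, 3 ≤ #(nbrIn G s v)
  · obtain ⟨v, hv⟩ := h
    have := hG.two_mul_card_le hk v
    have := hk _ nbrIn_subset (isIndepSet_nbrIn hG.cliqueFree_three (v := v))
    interval_cases #(nbrIn G s v) <;> omega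
  · push Not at h
    have := hG.three_mul_card_le (fun v _ => Nat.le_of_lt_succ (h v)) hk
    omega

theorem NoC3C5.not_indepBound_six (hG : NoC3C5 G) (hs : 16 ≤ #s) : ¬ IndepBound G s 6 := by
  intro hk
  by_cases h4 : ∃ v, 4 ≤ #(nbrIn G s v)
  · obtain ⟨v, hv⟩ := h4
    have := hG.two_mul_card_le hk v
    have := hk _ nbrIn_subset (isIndepSet_nbrIn hG.cliqueFree_three (v := v))
    interval_cases #(nbrIn G s v) <;> omega
  push Not at h4
  by_cases h3 : ∃ v, #(nbrIn G s v) = 3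
  · obtain ⟨v, hv⟩ := h3
    exact hG.not_indepBound_six_of_card_nbrIn_eq_three hs
      (fun w _ => Nat.le_of_lt_succ (h4 w)) hv hk
  · push Not at h3
    have := hG.three_mul_card_le (fun v _ => by have := h4 v; have := h3 v; omega) hk
    omega

end LowerBounds

section Circulant

open Pointwise

open SimpleGraph

variable {A : Type*} [AddCommGroup A] [DecidableEq A] {S : Finset A}

theorem SimpleGraph.Walk.sub_mem_nsmul {u v : A} (p : (circulantGraph (S : Set A)).Walk u v) :
    v - u ∈ p.length • (S ∪ -S) := by
  induction p with
  | nil => simp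
  | @cons u w v h p ih =>
    have hw : w - u ∈ S ∪ -S := by
      rw [circulantGraph_adj, mem_coe, mem_coe] at h
      rcases h.2 with h | h
      · exact mem_union_right _ (by simpa [mem_neg] using h)
      · exact mem_union_left _ h
    simpa [Walk.length_cons, succ_nsmul] using add_mem_add ih hw

theorem noC3C5_circulantGraph (h3 : (0 : A) ∉ 3 • (S ∪ -S)) (h5 : (0 : A) ∉ 5 • (S ∪ -S)) :
    NoC3C5 (circulantGraph (S : Set A)) := by
  refine ⟨?_, ?_⟩ <;> rintro ⟨v, c, -, hc⟩
  · exact h3 (by simpa [hc] using c.sub_mem_nsmul)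
  · exact h5 (by simpa [hc] using c.sub_mem_nsmul)

end Circulant

section IndependenceNumber

variable {V : Type*} [Fintype V] {G : SimpleGraph V}

theorem indepNum_eq_indepNum : indepNum G = G.indepNum := by
  simp only [indepNum, SimpleGraph.indepNum, SimpleGraph.isNIndepSet_iff, Set.Pairwise, mem_coe]
  congr 1
  ext n
  exact exists_congr fun _ => and_comm

theorem le_indepNum_of_not_indepBound {k : ℕ} (h : ¬ IndepBound G univ k) :
    k < indepNum G := by
  by_contra! hk
  exact h fun t _ ht => (ht.card_le_indepNum.trans_eq indepNum_eq_indepNum.symm).trans hk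

theorem two_mul_card_lt_of_isIndepSet {A : Type*} [AddCommGroup A] [Fintype A]
    {G : SimpleGraph A} {a : A} {n : ℕ} (ha : ∀ i, G.Adj i (i + a))
    (hn : ∀ i, G.Adj i (i + n • (a + a))) {s : Finset A} (hs : G.IsIndepSet (s : Set A)) :
    2 * #s < Fintype.card A := by
  classical
  by_contra! hA
  have hdisj : Disjoint s (s.image (· + a)) := by
    refine disjoint_right.2 fun _ hj hjs => ?_
    obtain ⟨i, hi, rfl⟩ := mem_image.1 hj
    exact hs hi hjs (ha i).ne (ha i)
  have hcard := card_union_of_disjoint hdisj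
  rw [card_image_of_injective _ (add_left_injective a)] at hcard
  have huniv : s ∪ s.image (· + a) = univ :=
    eq_univ_of_card _ (le_antisymm (card_le_univ _) (by omega))
  have hstep : ∀ i ∈ s, i + (a + a) ∈ s := by
    intro i hi
    rcases mem_union.1 (huniv ▸ mem_univ (i + (a + a))) with h | h
    · exact h
    · obtain ⟨j, hj, hji⟩ := mem_image.1 h
      obtain rfl : j = i + a := add_right_cancel (hji.trans (add_assoc i a a).symm)
      exact absurd (ha i) (hs hi hj (ha i).ne)
  have hiter : ∀ m : ℕ, ∀ i ∈ s, i + m • (a + a) ∈ s := by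
    intro m
    induction m with
    | zero => simp
    | succ m ih =>
      intro i hi
      rw [succ_nsmul, ← add_assoc]
      exact hstep _ (ih i hi)
  obtain ⟨i, hi⟩ : s.Nonempty := card_pos.1 (by have := Fintype.card_pos (α := A); omega)
  exact hs hi (hiter n i hi) (hn i).ne (hn i)

theorem indepNum_eq_of_isIndepSet {A : Type*} [AddCommGroup A] [Fintype A] {G : SimpleGraph A}
    {a : A} {n : ℕ} (ha : ∀ i, G.Adj i (i + a)) (hn : ∀ i, G.Adj i (i + n • (a + a)))
    {s : Finset A} (hs : G.IsIndepSet (s : Set A)) (hA : Fintype.card A = 2 * #s + 2) :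
    indepNum G = #s := by
  obtain ⟨t, ht⟩ := G.exists_isNIndepSet_indepNum
  have := two_mul_card_lt_of_isIndepSet ha hn ht.isIndepSet
  have := hs.card_le_indepNum
  rw [ht.card_eq] at *
  rw [indepNum_eq_indepNum]
  omega

end IndependenceNumber

theorem fmin_eq {n k : ℕ} {G : SimpleGraph (Fin n)} (hG : NoC3C5 G) (hGk : indepNum G = k)
    (h : ∀ H : SimpleGraph (Fin n), NoC3C5 H → k ≤ indepNum H) : fmin n = k :=
  le_antisymm (Nat.sInf_le ⟨G, hG, hGk⟩)
    (le_csInf ⟨k, G, hG, hGk⟩ fun _ ⟨H, hH, hHk⟩ => hHk ▸ h H hH)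

open SimpleGraph in
theorem fmin_twelve : fmin 12 = 5 := by
  classical
  refine fmin_eq (G := circulantGraph (({1, 6} : Finset (Fin 12)) : Set (Fin 12)))
    (noC3C5_circulantGraph (by decide) (by decide))
    (indepNum_eq_of_isIndepSet (a := 1) (n := 3) (s := {0, 2, 4, 7, 9}) (by decide) (by decide)
      (by decide) (by decide)) fun H hH => ?_
  exact le_indepNum_of_not_indepBound (hH.not_indepBound_four (by simp))

open SimpleGraph in
theorem fmin_sixteen : fmin 16 = 7 := by
  classical
  refine fmin_eq (G := circulantGraph (({1, 8} : Finset (Fin 16)) : Set (Fin 16)))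
    (noC3C5_circulantGraph (by decide) (by decide))
    (indepNum_eq_of_isIndepSet (a := 1) (n := 4) (s := {0, 2, 4, 6, 9, 11, 13}) (by decide)
      (by decide) (by decide) (by decide)) fun H hH => ?_
  exact le_indepNum_of_not_indepBound (hH.not_indepBound_six (by simp))

/-- `f(12) = 5` and `f(16) = 7`. -/
theorem fmin_values' : fmin 12 = 5 ∧ fmin 16 = 7 :=
  ⟨fmin_twelve, fmin_sixteen⟩

end
end
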